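/- arXiv:1202.6131 — 4 statements merged into one kernel-verified Lean document; each statement's English description precedes it below -/
import Mathlib

section
/- Let σ, ᾱ > 0 and λ01, λ10 ≥ 0 with λ01 + λ10 > 0. Define ρ0 = (3ᾱ²(λ10+λ01)/(4σ²))^{1/3}, ā = σ²ρ0²/2, k4 = -σ²/(12ᾱ²), k2 = ā/ᾱ², k1 = (λ10-λ01)/2, and w̄(ρ) = k4ρ⁴ + k2ρ² + k1ρ for ρ ∈ [-ρ0, ρ0], extended linearly with slope -λ01 for ρ ≤ -ρ0 and slope λ10 for ρ ≥ ρ0. Then w̄ is twice continuously differentiable on ℝ. -/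
/-!
On `[-ρ0, ρ0]` the quartic `q` has `q'' x = 12 k4 x² + 2 k2 = σ² (ρ0² - x²) / α²`, which vanishes
at `±ρ0`, and `ρ0³ = 3 α² (λ10 + λ01) / (4 σ²)` is exactly what makes `q' ρ0 = λ10` and
`q' (-ρ0) = -λ01`. So `w̄` is `q` continued by its tangent lines at two inflection points, where it
agrees with them to second order. Pasting two `C^n` functions at a point where their derivatives up
to order `n` agree gives a `C^n` function, by induction on `n`: the derivative of the pasted
function is the pasted derivative.
-/

open Filter Topology Set

noncomputable def pasteAt (a : ℝ) (g h : ℝ → ℝ) : ℝ → ℝ := fun x => if x ≤ a then g x else h x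

section Paste

variable {a : ℝ} {g h : ℝ → ℝ}

lemma pasteAt_eqOn_Iic : EqOn (pasteAt a g h) g (Iic a) := fun _ hx => if_pos hx

lemma pasteAt_eqOn_Ici (hgh : g a = h a) : EqOn (pasteAt a g h) h (Ici a) := by
  intro x hx
  rcases (mem_Ici.1 hx).eq_or_lt with rfl | hlt
  · exact (if_pos le_rfl).trans hgh
  · exact if_neg hlt.not_ge

lemma pasteAt_eventuallyEq_left {x : ℝ} (hx : x < a) : pasteAt a g h =ᶠ[𝓝 x] g :=
  eventually_of_mem (Iio_mem_nhds hx) fun _ hy => pasteAt_eqOn_Iic (mem_Iic.2 (le_of_lt hy))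

lemma pasteAt_eventuallyEq_right {x : ℝ} (hx : a < x) : pasteAt a g h =ᶠ[𝓝 x] h :=
  eventually_of_mem (Ioi_mem_nhds hx) fun _ hy => if_neg (not_le.2 hy)

lemma ite_lt_eq_pasteAt (hgh : g a = h a) :
    (fun x => if x < a then g x else h x) = pasteAt a g h := by
  ext x
  by_cases hx : x < a
  · rw [if_pos hx, pasteAt_eqOn_Iic (mem_Iic.2 hx.le)]
  · rw [if_neg hx, pasteAt_eqOn_Ici hgh (mem_Ici.2 (not_lt.1 hx))]

lemma hasDerivAt_pasteAt (hg : Differentiable ℝ g) (hh : Differentiable ℝ h)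
    (h0 : g a = h a) (h1 : deriv g a = deriv h a) (x : ℝ) :
    HasDerivAt (pasteAt a g h) (pasteAt a (deriv g) (deriv h) x) x := by
  rcases lt_trichotomy x a with hx | rfl | hx
  · rw [pasteAt_eventuallyEq_left hx |>.eq_of_nhds]
    exact (hg x).hasDerivAt.congr_of_eventuallyEq (pasteAt_eventuallyEq_left hx)
  · rw [pasteAt_eqOn_Iic self_mem_Iic]
    have hleft : HasDerivWithinAt (pasteAt x g h) (deriv g x) (Iic x) x :=
      (hg x).hasDerivAt.hasDerivWithinAt.congr pasteAt_eqOn_Iic (pasteAt_eqOn_Iic self_mem_Iic)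
    have hright : HasDerivWithinAt (pasteAt x g h) (deriv g x) (Ici x) x := by
      rw [h1]
      exact (hh x).hasDerivAt.hasDerivWithinAt.congr (pasteAt_eqOn_Ici h0)
        (pasteAt_eqOn_Ici h0 self_mem_Ici)
    simpa [Iic_union_Ici] using hleft.union hright
  · rw [pasteAt_eventuallyEq_right hx |>.eq_of_nhds]
    exact (hh x).hasDerivAt.congr_of_eventuallyEq (pasteAt_eventuallyEq_right hx)

theorem contDiff_pasteAt {n : ℕ} (hg : ContDiff ℝ n g) (hh : ContDiff ℝ n h)
    (hgh : ∀ k ≤ n, iteratedDeriv k g a = iteratedDeriv k h a) :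
    ContDiff ℝ n (pasteAt a g h) := by
  induction n generalizing g h with
  | zero =>
    refine contDiff_zero.2 (hg.continuous.if_le hh.continuous continuous_id continuous_const ?_)
    rintro x rfl
    simpa using hgh 0 le_rfl
  | succ n ih =>
    rw [Nat.cast_succ, contDiff_succ_iff_deriv] at hg hh ⊢
    have h0 : g a = h a := by simpa using hgh 0 (Nat.zero_le _)
    have h1 : deriv g a = deriv h a := by simpa using hgh 1 (by omega)
    have hderiv := hasDerivAt_pasteAt hg.1 hh.1 h0 h1
    refine ⟨fun x => (hderiv x).differentiableAt, by simp, ?_⟩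
    rw [show deriv (pasteAt a g h) = pasteAt a (deriv g) (deriv h) from
      funext fun x => (hderiv x).deriv]
    refine ih hg.2.2 hh.2.2 fun k hk => ?_
    simpa only [iteratedDeriv_succ'] using hgh (k + 1) (by omega)

end Paste

lemma deriv_quartic (k4 k2 k1 : ℝ) :
    deriv (fun ρ : ℝ => k4 * ρ ^ 4 + k2 * ρ ^ 2 + k1 * ρ) =
      fun x => 4 * k4 * x ^ 3 + 2 * k2 * x + k1 := by
  ext x
  exact ((((hasDerivAt_pow 4 x).const_mul k4).add ((hasDerivAt_pow 2 x).const_mul k2)).add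
    ((hasDerivAt_id x).const_mul k1)).deriv.trans (by simp; ring)

lemma iteratedDeriv_two_quartic (k4 k2 k1 x : ℝ) :
    iteratedDeriv 2 (fun ρ : ℝ => k4 * ρ ^ 4 + k2 * ρ ^ 2 + k1 * ρ) x =
      12 * k4 * x ^ 2 + 2 * k2 := by
  rw [iteratedDeriv_succ, iteratedDeriv_one, deriv_quartic]
  exact ((((hasDerivAt_pow 3 x).const_mul (4 * k4)).add
    ((hasDerivAt_id x).const_mul (2 * k2))).add_const k1).deriv.trans (by simp; ring)

lemma iteratedDeriv_tangent_eq {f : ℝ → ℝ} {a m : ℝ} (hm : deriv f a = m)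
    (h2 : iteratedDeriv 2 f a = 0) :
    ∀ k ≤ 2, iteratedDeriv k (fun x => f a + m * (x - a)) a = iteratedDeriv k f a := by
  intro k hk
  interval_cases k
  · simp
  · simp [hm]
  · rw [h2, iteratedDeriv_succ, iteratedDeriv_one]
    simp

theorem contDiff_two_pasteAt_tangent_right {f : ℝ → ℝ} {a m : ℝ} (hf : ContDiff ℝ 2 f)
    (hm : deriv f a = m) (h2 : iteratedDeriv 2 f a = 0) :
    ContDiff ℝ 2 (pasteAt a f fun x => f a + m * (x - a)) :=
  contDiff_pasteAt hf (by fun_prop) fun k hk =>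
    (iteratedDeriv_tangent_eq hm h2 k hk).symm

theorem contDiff_two_pasteAt_tangent_left {f : ℝ → ℝ} {a m : ℝ} (hf : ContDiff ℝ 2 f)
    (hm : deriv f a = m) (h2 : iteratedDeriv 2 f a = 0) :
    ContDiff ℝ 2 (pasteAt a (fun x => f a + m * (x - a)) f) :=
  contDiff_pasteAt (by fun_prop) hf (iteratedDeriv_tangent_eq hm h2)

lemma deriv_corrector_quartic {α : ℝ} (hα : α ≠ 0) (σ ρ0 k1 x : ℝ) :
    deriv (fun ρ => -σ ^ 2 / (12 * α ^ 2) * ρ ^ 4 + σ ^ 2 * ρ0 ^ 2 / 2 / α ^ 2 * ρ ^ 2 + k1 * ρ) x =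
      k1 + σ ^ 2 * x * (3 * ρ0 ^ 2 - x ^ 2) / (3 * α ^ 2) := by
  rw [deriv_quartic]
  field_simp
  ring

lemma iteratedDeriv_two_corrector_quartic {α : ℝ} (hα : α ≠ 0) (σ ρ0 k1 x : ℝ) :
    iteratedDeriv 2
        (fun ρ => -σ ^ 2 / (12 * α ^ 2) * ρ ^ 4 + σ ^ 2 * ρ0 ^ 2 / 2 / α ^ 2 * ρ ^ 2 + k1 * ρ) x =
      σ ^ 2 * (ρ0 ^ 2 - x ^ 2) / α ^ 2 := by
  rw [iteratedDeriv_two_quartic]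
  field_simp
  ring

theorem stmt_0_general (σ α l01 l10 : ℝ) (hσ : 0 < σ) (hα : 0 < α)
    (hsum : 0 < l01 + l10) :
    let ρ0 : ℝ := (3 * α ^ 2 * (l10 + l01) / (4 * σ ^ 2)) ^ ((1 : ℝ) / 3)
    let abar : ℝ := σ ^ 2 * ρ0 ^ 2 / 2
    let k4 : ℝ := -σ ^ 2 / (12 * α ^ 2)
    let k2 : ℝ := abar / α ^ 2
    let k1 : ℝ := (l10 - l01) / 2
    let q : ℝ → ℝ := fun ρ => k4 * ρ ^ 4 + k2 * ρ ^ 2 + k1 * ρ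
    let w : ℝ → ℝ := fun ρ =>
      if ρ < -ρ0 then q (-ρ0) - l01 * (ρ - (-ρ0))
      else if ρ ≤ ρ0 then q ρ
      else q ρ0 + l10 * (ρ - ρ0)
    ContDiff ℝ 2 w := by
  intro ρ0 abar k4 k2 k1 q w
  have hbase : 0 < 3 * α ^ 2 * (l10 + l01) / (4 * σ ^ 2) := by
    have : 0 < l10 + l01 := by linarith
    positivity
  have hρ0 : 0 < ρ0 := Real.rpow_pos_of_pos hbase _
  have hcube : ρ0 ^ 3 = 3 * α ^ 2 * (l10 + l01) / (4 * σ ^ 2) := by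
    simp only [ρ0, one_div]
    exact Real.rpow_inv_natCast_pow hbase.le three_ne_zero
  have hq : ContDiff ℝ 2 q := by fun_prop
  have hd2q (x : ℝ) (hx : x ^ 2 = ρ0 ^ 2) : iteratedDeriv 2 q x = 0 :=
    (iteratedDeriv_two_corrector_quartic hα.ne' σ ρ0 k1 x).trans (by rw [hx, sub_self]; simp)
  have hdq (x : ℝ) : deriv q x = k1 + σ ^ 2 * x * (3 * ρ0 ^ 2 - x ^ 2) / (3 * α ^ 2) :=
    deriv_corrector_quartic hα.ne' σ ρ0 k1 x
  have hdq_right : deriv q ρ0 = l10 := by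
    rw [hdq, show σ ^ 2 * ρ0 * (3 * ρ0 ^ 2 - ρ0 ^ 2) = 2 * σ ^ 2 * ρ0 ^ 3 by ring, hcube]
    field_simp
    ring
  have hdq_left : deriv q (-ρ0) = -l01 := by
    rw [hdq, show σ ^ 2 * -ρ0 * (3 * ρ0 ^ 2 - (-ρ0) ^ 2) = -2 * σ ^ 2 * ρ0 ^ 3 by ring, hcube]
    field_simp
    ring
  set qr := pasteAt ρ0 q fun x => q ρ0 + l10 * (x - ρ0)
  have hqr : ContDiff ℝ 2 qr :=
    contDiff_two_pasteAt_tangent_right hq hdq_right (hd2q ρ0 rfl)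
  have hnear : qr =ᶠ[𝓝 (-ρ0)] q := pasteAt_eventuallyEq_left (by linarith)
  have hw : w = pasteAt (-ρ0) (fun x => qr (-ρ0) + -l01 * (x - -ρ0)) qr := by
    rw [← ite_lt_eq_pasteAt (by ring)]
    exact funext fun x => if_congr Iff.rfl (by rw [hnear.eq_of_nhds]; ring) rfl
  rw [hw]
  exact contDiff_two_pasteAt_tangent_left hqr (by rw [hnear.deriv_eq, hdq_left])
    (by rw [hnear.iteratedDeriv_eq, hd2q _ (neg_sq ρ0)])

/-- The explicitly pasted corrector candidate is twice continuously differentiable. -/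
theorem stmt_0 (σ α l01 l10 : ℝ) (hσ : 0 < σ) (hα : 0 < α)
    (h01 : 0 ≤ l01) (h10 : 0 ≤ l10) (hsum : 0 < l01 + l10) :
    let ρ0 : ℝ := (3 * α ^ 2 * (l10 + l01) / (4 * σ ^ 2)) ^ ((1 : ℝ) / 3)
    let abar : ℝ := σ ^ 2 * ρ0 ^ 2 / 2
    let k4 : ℝ := -σ ^ 2 / (12 * α ^ 2)
    let k2 : ℝ := abar / α ^ 2
    let k1 : ℝ := (l10 - l01) / 2
    let q : ℝ → ℝ := fun ρ => k4 * ρ ^ 4 + k2 * ρ ^ 2 + k1 * ρ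
    let w : ℝ → ℝ := fun ρ =>
      if ρ < -ρ0 then q (-ρ0) - l01 * (ρ - (-ρ0))
      else if ρ ≤ ρ0 then q ρ
      else q ρ0 + l10 * (ρ - ρ0)
    ContDiff ℝ 2 w :=
  stmt_0_general σ α l01 l10 hσ hα hsum
end

section
/- With the notation above (σ, ᾱ > 0, λ01, λ10 ≥ 0 with λ01+λ10 > 0, ρ0 = (3ᾱ²(λ10+λ01)/(4σ²))^{1/3}, ā = σ²ρ0²/2, and w̄ the C² pasted function), the pair (ā, w̄) solves the first corrector equation: for all ρ ∈ ℝ, max{ -σ²ρ²/2 - (ᾱ²/2) w̄''(ρ) + ā, -λ10 + w̄'(ρ), -λ01 - w̄'(ρ) } = 0, and w̄(0) = 0. -/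
/-!
On `[-ρ0, ρ0]` the quartic has `w̄'' = σ²(ρ0² - ρ²)/ᾱ²`, so it solves the equation
`-σ²ρ²/2 - (ᾱ²/2) w̄'' + ā = 0` exactly, and `w̄''` vanishes at `±ρ0`. The cube root is chosen so
that `4σ²ρ0³ = 3ᾱ²(λ10 + λ01)`; under this relation
`λ10 - w̄'(ρ) = σ²(ρ0 - ρ)²(2ρ0 + ρ)/(3ᾱ²)` and `w̄'(ρ) + λ01 = σ²(ρ + ρ0)²(2ρ0 - ρ)/(3ᾱ²)`.
These factorizations give both the smooth pasting of `w̄'` with the slopes `-λ01`, `λ10` and the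
gradient constraints inside. Outside, `w̄'' = 0`, one gradient constraint is active, and
`ρ² ≥ ρ0²` makes the first term nonpositive.
-/

open Set

section Pasting

variable {E : Type*} [NormedAddCommGroup E] [NormedSpace ℝ E]
  {f g h f' g' h' : ℝ → E} {a b : ℝ}

theorem hasDerivAt_ite_le (hf : ∀ x, HasDerivAt f (f' x) x) (hg : ∀ x, HasDerivAt g (g' x) x)
    (hfg : f a = g a) (hfg' : f' a = g' a) (x : ℝ) :
    HasDerivAt (fun y => if y ≤ a then f y else g y) (if x ≤ a then f' x else g' x) x := by
  rcases lt_trichotomy x a with hx | rfl | hx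
  · rw [if_pos hx.le]
    exact (hf x).congr_of_eventuallyEq <| (eventually_le_nhds hx).mono fun y hy => if_pos hy
  · rw [if_pos le_rfl, ← hasDerivWithinAt_univ, ← Iic_union_Ici]
    refine ((hf x).hasDerivWithinAt.congr_of_mem (fun y hy => if_pos hy) self_mem_Iic).union ?_
    rw [hfg']
    refine (hg x).hasDerivWithinAt.congr_of_mem (fun y hy => ?_) self_mem_Ici
    split_ifs with hyx
    · rw [le_antisymm hyx (mem_Ici.mp hy), hfg]
    · rfl
  · rw [if_neg hx.not_ge]
    exact (hg x).congr_of_eventuallyEq <|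
      (eventually_gt_nhds hx).mono fun y hy => if_neg hy.not_ge

theorem hasDerivAt_ite_lt (hf : ∀ x, HasDerivAt f (f' x) x) (hg : ∀ x, HasDerivAt g (g' x) x)
    (hfg : f a = g a) (hfg' : f' a = g' a) (x : ℝ) :
    HasDerivAt (fun y => if y < a then f y else g y) (if x < a then f' x else g' x) x := by
  have ite_lt_eq_ite_le : ∀ {u v : ℝ → E}, u a = v a → ∀ y,
      (if y < a then u y else v y) = if y ≤ a then u y else v y := by
    intro u v huv y
    rcases lt_trichotomy y a with hy | rfl | hy
    · simp [hy, hy.le]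
    · simp [huv]
    · simp [hy.not_gt, hy.not_ge]
  simpa only [ite_lt_eq_ite_le hfg, ite_lt_eq_ite_le hfg'] using
    hasDerivAt_ite_le hf hg hfg hfg' x

theorem deriv_ite_lt_ite_le (hab : a ≤ b) (hf : ∀ x, HasDerivAt f (f' x) x)
    (hg : ∀ x, HasDerivAt g (g' x) x) (hh : ∀ x, HasDerivAt h (h' x) x)
    (hfg : f a = g a) (hgh : g b = h b) (hfg' : f' a = g' a) (hgh' : g' b = h' b) :
    deriv (fun y => if y < a then f y else if y ≤ b then g y else h y) =
      fun x => if x < a then f' x else if x ≤ b then g' x else h' x :=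
  funext fun x => (hasDerivAt_ite_lt hf (hasDerivAt_ite_le hg hh hgh hgh')
    (by rwa [if_pos hab]) (by rwa [if_pos hab]) x).deriv

end Pasting

theorem max_max_eq_of_le {α : Type*} [LinearOrder α] {a b c m : α}
    (ha : a ≤ m) (hb : b ≤ m) (hc : c ≤ m) (h : a = m ∨ b = m ∨ c = m) :
    max (max a b) c = m := by
  refine le_antisymm (max_le (max_le ha hb) hc) ?_
  rcases h with rfl | rfl | rfl <;> simp

theorem rpow_one_third_pow_three {x : ℝ} (hx : 0 ≤ x) : (x ^ ((1 : ℝ) / 3)) ^ 3 = x := by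
  simpa using Real.rpow_inv_natCast_pow hx (n := 3) (by norm_num)

section Corrector

noncomputable def correctorQuartic (σ α ρ0 l01 l10 ρ : ℝ) : ℝ :=
  -σ ^ 2 / (12 * α ^ 2) * ρ ^ 4 + σ ^ 2 * ρ0 ^ 2 / 2 / α ^ 2 * ρ ^ 2 + (l10 - l01) / 2 * ρ

noncomputable def correctorSlope (σ α ρ0 l01 l10 ρ : ℝ) : ℝ :=
  -σ ^ 2 / (3 * α ^ 2) * ρ ^ 3 + σ ^ 2 * ρ0 ^ 2 / α ^ 2 * ρ + (l10 - l01) / 2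

-- The function `w` of the statement, for an arbitrary `ρ0`: the two agree definitionally.
noncomputable def corrector (σ α ρ0 l01 l10 : ℝ) : ℝ → ℝ := fun ρ =>
  if ρ < -ρ0 then correctorQuartic σ α ρ0 l01 l10 (-ρ0) - l01 * (ρ - (-ρ0))
  else if ρ ≤ ρ0 then correctorQuartic σ α ρ0 l01 l10 ρ
  else correctorQuartic σ α ρ0 l01 l10 ρ0 + l10 * (ρ - ρ0)

variable {σ α ρ0 l01 l10 : ℝ}

theorem hasDerivAt_correctorQuartic (x : ℝ) :
    HasDerivAt (correctorQuartic σ α ρ0 l01 l10) (correctorSlope σ α ρ0 l01 l10 x) x :=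
  (((hasDerivAt_pow 4 x).const_mul _).fun_add ((hasDerivAt_pow 2 x).const_mul _)).fun_add
    ((hasDerivAt_id' x).const_mul _) |>.congr_deriv (by simp only [correctorSlope]; norm_num; ring)

theorem hasDerivAt_correctorSlope (x : ℝ) :
    HasDerivAt (correctorSlope σ α ρ0 l01 l10) (σ ^ 2 / α ^ 2 * (ρ0 ^ 2 - x ^ 2)) x :=
  (((hasDerivAt_pow 3 x).const_mul _).fun_add ((hasDerivAt_id' x).const_mul _)).add_const _
    |>.congr_deriv (by norm_num; ring)

theorem sub_correctorSlope (hα : α ≠ 0)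
    (hcube : 4 * σ ^ 2 * ρ0 ^ 3 = 3 * α ^ 2 * (l10 + l01)) (ρ : ℝ) :
    l10 - correctorSlope σ α ρ0 l01 l10 ρ =
      σ ^ 2 / (3 * α ^ 2) * ((ρ0 - ρ) ^ 2 * (2 * ρ0 + ρ)) := by
  unfold correctorSlope
  field_simp
  linear_combination -hcube

theorem correctorSlope_add (hα : α ≠ 0)
    (hcube : 4 * σ ^ 2 * ρ0 ^ 3 = 3 * α ^ 2 * (l10 + l01)) (ρ : ℝ) :
    correctorSlope σ α ρ0 l01 l10 ρ + l01 =
      σ ^ 2 / (3 * α ^ 2) * ((ρ + ρ0) ^ 2 * (2 * ρ0 - ρ)) := by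
  unfold correctorSlope
  field_simp
  linear_combination -hcube

theorem deriv_corrector (hα : α ≠ 0) (hρ0 : 0 ≤ ρ0)
    (hcube : 4 * σ ^ 2 * ρ0 ^ 3 = 3 * α ^ 2 * (l10 + l01)) :
    deriv (corrector σ α ρ0 l01 l10) = fun x =>
      if x < -ρ0 then -l01 else if x ≤ ρ0 then correctorSlope σ α ρ0 l01 l10 x else l10 :=
  deriv_ite_lt_ite_le (by linarith)
    (fun x => (((hasDerivAt_id' x).sub_const (-ρ0)).const_mul l01 |>.const_sub _).congr_deriv
      (by ring))
    hasDerivAt_correctorQuartic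
    (fun x => (((hasDerivAt_id' x).sub_const ρ0).const_mul l10 |>.const_add _).congr_deriv
      (mul_one _))
    (by ring) (by ring)
    (by linarith [correctorSlope_add hα hcube (-ρ0)])
    (by linarith [sub_correctorSlope hα hcube ρ0])

theorem deriv_deriv_corrector (hα : α ≠ 0) (hρ0 : 0 ≤ ρ0)
    (hcube : 4 * σ ^ 2 * ρ0 ^ 3 = 3 * α ^ 2 * (l10 + l01)) :
    deriv (deriv (corrector σ α ρ0 l01 l10)) = fun x =>
      if x < -ρ0 then 0 else if x ≤ ρ0 then σ ^ 2 / α ^ 2 * (ρ0 ^ 2 - x ^ 2) else 0 := by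
  rw [deriv_corrector hα hρ0 hcube]
  exact deriv_ite_lt_ite_le (by linarith) (fun x => hasDerivAt_const x _)
    hasDerivAt_correctorSlope (fun x => hasDerivAt_const x _)
    (by linarith [correctorSlope_add hα hcube (-ρ0)])
    (by linarith [sub_correctorSlope hα hcube ρ0])
    (by ring) (by ring)

theorem corrector_residual_eq_zero (hα : α ≠ 0) (hρ0 : 0 ≤ ρ0)
    (hcube : 4 * σ ^ 2 * ρ0 ^ 3 = 3 * α ^ 2 * (l10 + l01)) (ρ : ℝ) :
    max (max (-(σ ^ 2 * ρ ^ 2) / 2 - α ^ 2 / 2 * deriv (deriv (corrector σ α ρ0 l01 l10)) ρ +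
          σ ^ 2 * ρ0 ^ 2 / 2)
        (-l10 + deriv (corrector σ α ρ0 l01 l10) ρ))
      (-l01 - deriv (corrector σ α ρ0 l01 l10) ρ) = 0 := by
  have hsum : 0 ≤ l10 + l01 := by
    have : 0 ≤ 4 * σ ^ 2 * ρ0 ^ 3 := by positivity
    nlinarith [sq_pos_of_ne_zero hα]
  rw [deriv_deriv_corrector hα hρ0 hcube, deriv_corrector hα hρ0 hcube]
  beta_reduce
  split_ifs with hl hr
  · have : σ ^ 2 * ρ0 ^ 2 ≤ σ ^ 2 * ρ ^ 2 :=
      mul_le_mul_of_nonneg_left (by nlinarith) (sq_nonneg σ)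
    exact max_max_eq_of_le (by linarith) (by linarith) (by linarith) (.inr (.inr (by ring)))
  · have hode : -(σ ^ 2 * ρ ^ 2) / 2 - α ^ 2 / 2 * (σ ^ 2 / α ^ 2 * (ρ0 ^ 2 - ρ ^ 2)) +
        σ ^ 2 * ρ0 ^ 2 / 2 = 0 := by
      field_simp
      ring
    have hc : 0 ≤ σ ^ 2 / (3 * α ^ 2) := by positivity
    have hupper := mul_nonneg hc <|
      mul_nonneg (sq_nonneg (ρ0 - ρ)) (by linarith : 0 ≤ 2 * ρ0 + ρ)
    have hlower := mul_nonneg hc <|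
      mul_nonneg (sq_nonneg (ρ + ρ0)) (by linarith : 0 ≤ 2 * ρ0 - ρ)
    rw [← sub_correctorSlope hα hcube] at hupper
    rw [← correctorSlope_add hα hcube] at hlower
    exact max_max_eq_of_le hode.le (by linarith) (by linarith) (.inl hode)
  · have : σ ^ 2 * ρ0 ^ 2 ≤ σ ^ 2 * ρ ^ 2 :=
      mul_le_mul_of_nonneg_left (by nlinarith) (sq_nonneg σ)
    exact max_max_eq_of_le (by linarith) (by linarith) (by linarith) (.inr (.inl (by ring)))

theorem corrector_zero (hρ0 : 0 ≤ ρ0) : corrector σ α ρ0 l01 l10 0 = 0 := by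
  simp [corrector, correctorQuartic, hρ0, hρ0.not_gt]

end Corrector

theorem stmt_1_general (σ α l01 l10 : ℝ) (hσ : 0 < σ) (hα : 0 < α)
    (hsum : 0 < l01 + l10) :
    let ρ0 : ℝ := (3 * α ^ 2 * (l10 + l01) / (4 * σ ^ 2)) ^ ((1 : ℝ) / 3)
    let abar : ℝ := σ ^ 2 * ρ0 ^ 2 / 2
    let k4 : ℝ := -σ ^ 2 / (12 * α ^ 2)
    let k2 : ℝ := abar / α ^ 2
    let k1 : ℝ := (l10 - l01) / 2
    let q : ℝ → ℝ := fun ρ => k4 * ρ ^ 4 + k2 * ρ ^ 2 + k1 * ρ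
    let w : ℝ → ℝ := fun ρ =>
      if ρ < -ρ0 then q (-ρ0) - l01 * (ρ - (-ρ0))
      else if ρ ≤ ρ0 then q ρ
      else q ρ0 + l10 * (ρ - ρ0)
    (∀ ρ : ℝ,
      max (max (-(σ ^ 2 * ρ ^ 2) / 2 - α ^ 2 / 2 * deriv (deriv w) ρ + abar)
               (-l10 + deriv w ρ))
          (-l01 - deriv w ρ) = 0) ∧ w 0 = 0 := by
  intro ρ0
  have hX : 0 ≤ 3 * α ^ 2 * (l10 + l01) / (4 * σ ^ 2) := by
    have : 0 ≤ l10 + l01 := by linarith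
    positivity
  have hcube : 4 * σ ^ 2 * ρ0 ^ 3 = 3 * α ^ 2 * (l10 + l01) := by
    rw [rpow_one_third_pow_three hX]
    field_simp [hσ.ne']
  have hρ0 : 0 ≤ ρ0 := Real.rpow_nonneg hX _
  exact ⟨corrector_residual_eq_zero hα.ne' hρ0 hcube, corrector_zero hρ0⟩

/-- The pair (ā, w̄) solves the first corrector equation pointwise, with w̄(0) = 0. -/
theorem stmt_1 (σ α l01 l10 : ℝ) (hσ : 0 < σ) (hα : 0 < α)
    (h01 : 0 ≤ l01) (h10 : 0 ≤ l10) (hsum : 0 < l01 + l10) :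
    let ρ0 : ℝ := (3 * α ^ 2 * (l10 + l01) / (4 * σ ^ 2)) ^ ((1 : ℝ) / 3)
    let abar : ℝ := σ ^ 2 * ρ0 ^ 2 / 2
    let k4 : ℝ := -σ ^ 2 / (12 * α ^ 2)
    let k2 : ℝ := abar / α ^ 2
    let k1 : ℝ := (l10 - l01) / 2
    let q : ℝ → ℝ := fun ρ => k4 * ρ ^ 4 + k2 * ρ ^ 2 + k1 * ρ
    let w : ℝ → ℝ := fun ρ =>
      if ρ < -ρ0 then q (-ρ0) - l01 * (ρ - (-ρ0))
      else if ρ ≤ ρ0 then q ρ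
      else q ρ0 + l10 * (ρ - ρ0)
    (∀ ρ : ℝ,
      max (max (-(σ ^ 2 * ρ ^ 2) / 2 - α ^ 2 / 2 * deriv (deriv w) ρ + abar)
               (-l10 + deriv w ρ))
          (-l01 - deriv w ρ) = 0) ∧ w 0 = 0 :=
  stmt_1_general σ α l01 l10 hσ hα hsum
end

section
/- With (ā, w̄) as above, the gradient constraint -λ01 ≤ w̄'(ρ) ≤ λ10 holds for all ρ ∈ ℝ. -/
set_option maxHeartbeats 1000000

/-- The gradient constraint -l01 ≤ w̄' ≤ l10 holds globally. -/
theorem stmt_2 (σ α l01 l10 : ℝ) (hσ : 0 < σ) (hα : 0 < α)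
    (h01 : 0 ≤ l01) (h10 : 0 ≤ l10) (hsum : 0 < l01 + l10) :
    let ρ0 : ℝ := (3 * α ^ 2 * (l10 + l01) / (4 * σ ^ 2)) ^ ((1 : ℝ) / 3)
    let abar : ℝ := σ ^ 2 * ρ0 ^ 2 / 2
    let k4 : ℝ := -σ ^ 2 / (12 * α ^ 2)
    let k2 : ℝ := abar / α ^ 2
    let k1 : ℝ := (l10 - l01) / 2
    let q : ℝ → ℝ := fun ρ => k4 * ρ ^ 4 + k2 * ρ ^ 2 + k1 * ρ
    let w : ℝ → ℝ := fun ρ =>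
      if ρ < -ρ0 then q (-ρ0) - l01 * (ρ - (-ρ0))
      else if ρ ≤ ρ0 then q ρ
      else q ρ0 + l10 * (ρ - ρ0)
    ∀ ρ : ℝ, -l01 ≤ deriv w ρ ∧ deriv w ρ ≤ l10 := by
  intro ρ0 abar k4 k2 k1 q w ρ
  have hσ2 : (0:ℝ) < σ ^ 2 := by positivity
  have hα2 : (0:ℝ) < α ^ 2 := by positivity
  have hsum' : 0 < l10 + l01 := by linarith
  have hb : (0:ℝ) < 3 * α ^ 2 * (l10 + l01) / (4 * σ ^ 2) := by positivity
  have hρ0 : 0 < ρ0 := Real.rpow_pos_of_pos hb _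
  have hcube : σ ^ 2 * ρ0 ^ 3 * 4 = 3 * α ^ 2 * (l10 + l01) := by
    have : ρ0 ^ 3 = 3 * α ^ 2 * (l10 + l01) / (4 * σ ^ 2) := by
      show ((3 * α ^ 2 * (l10 + l01) / (4 * σ ^ 2)) ^ ((1:ℝ)/3)) ^ 3 = _
      rw [← Real.rpow_natCast (_ ^ ((1:ℝ)/3)) 3, ← Real.rpow_mul hb.le]
      norm_num
    rw [this]; field_simp
  -- derivative of the quartic part
  have hq : ∀ x : ℝ, HasDerivAt q (4 * k4 * x ^ 3 + 2 * k2 * x + k1) x := by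
    intro x
    have h1 := (hasDerivAt_pow 4 x).const_mul k4
    have h2 := (hasDerivAt_pow 2 x).const_mul k2
    have h3 := (hasDerivAt_id x).const_mul k1
    exact ((h1.add h2).add h3).congr_deriv (by norm_num; ring)
  have hk2 : k2 = σ ^ 2 * ρ0 ^ 2 / 2 / α ^ 2 := rfl
  have hk4 : k4 = -σ ^ 2 / (12 * α ^ 2) := rfl
  have hk1 : k1 = (l10 - l01) / 2 := rfl
  -- the derivative values at the cut points
  have hqr : 4 * k4 * ρ0 ^ 3 + 2 * k2 * ρ0 + k1 = l10 := by
    rw [hk4, hk2, hk1]; field_simp; nlinarith [hcube]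
  have hql : 4 * k4 * (-ρ0) ^ 3 + 2 * k2 * (-ρ0) + k1 = -l01 := by
    rw [hk4, hk2, hk1]; field_simp; nlinarith [hcube]
  -- bounds on the interior
  have hbound : ∀ x : ℝ, -ρ0 ≤ x → x ≤ ρ0 →
      -l01 ≤ 4 * k4 * x ^ 3 + 2 * k2 * x + k1 ∧
      4 * k4 * x ^ 3 + 2 * k2 * x + k1 ≤ l10 := by
    intro x hx1 hx2
    have e1 : 3 * α ^ 2 * (4 * k4 * x ^ 3 + 2 * k2 * x + k1 + l01)
        = σ ^ 2 * ((ρ0 + x) ^ 2 * (2 * ρ0 - x)) := by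
      rw [hk4, hk2, hk1]; field_simp
      linear_combination (-12) * hcube
    have e2 : 3 * α ^ 2 * (l10 - (4 * k4 * x ^ 3 + 2 * k2 * x + k1))
        = σ ^ 2 * ((ρ0 - x) ^ 2 * (2 * ρ0 + x)) := by
      rw [hk4, hk2, hk1]; field_simp
      linear_combination (-12) * hcube
    have p1 : 0 ≤ σ ^ 2 * ((ρ0 + x) ^ 2 * (2 * ρ0 - x)) :=
      mul_nonneg hσ2.le (mul_nonneg (sq_nonneg _) (by linarith))
    have p2 : 0 ≤ σ ^ 2 * ((ρ0 - x) ^ 2 * (2 * ρ0 + x)) :=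
      mul_nonneg hσ2.le (mul_nonneg (sq_nonneg _) (by linarith))
    rw [← e1] at p1
    rw [← e2] at p2
    constructor
    · nlinarith [p1, hα2]
    · nlinarith [p2, hα2]
  -- affine pieces
  have haffL : ∀ x : ℝ, HasDerivAt (fun y => q (-ρ0) - l01 * (y - (-ρ0))) (-l01) x := by
    intro x
    have := ((hasDerivAt_id x).sub_const (-ρ0)).const_mul l01
    have := (hasDerivAt_const x (q (-ρ0))).sub this
    exact this.congr_deriv (by ring)
  have haffR : ∀ x : ℝ, HasDerivAt (fun y => q ρ0 + l10 * (y - ρ0)) l10 x := by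
    intro x
    have := ((hasDerivAt_id x).sub_const ρ0).const_mul l10
    have := (hasDerivAt_const x (q ρ0)).add this
    exact this.congr_deriv (by ring)
  -- case split
  rcases lt_trichotomy ρ (-ρ0) with hc | hc | hc
  · -- left affine region
    have hev : w =ᶠ[nhds ρ] (fun y => q (-ρ0) - l01 * (y - (-ρ0))) := by
      filter_upwards [Iio_mem_nhds hc] with x hx
      simp only [w]
      rw [if_pos (show x < -ρ0 from hx)]
    have : deriv w ρ = -l01 := by rw [hev.deriv_eq, (haffL ρ).deriv]
    rw [this]
    constructor <;> linarith
  · -- left cut point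
    have hL : HasDerivWithinAt w (-l01) (Set.Iic (-ρ0)) ρ := by
      apply ((haffL ρ).hasDerivWithinAt).congr
      · intro x hx
        rcases lt_or_eq_of_le (show x ≤ -ρ0 from hx) with h | h
        · simp only [w]; rw [if_pos h]
        · simp only [w, h]
          rw [if_neg (lt_irrefl _), if_pos (by linarith)]
          ring
      · rw [hc]
        simp only [w]
        rw [if_neg (lt_irrefl _), if_pos (by linarith)]
        ring
    have hR : HasDerivWithinAt w (-l01) (Set.Ici (-ρ0)) ρ := by
      have hq' : HasDerivWithinAt q (-l01) (Set.Ici (-ρ0)) ρ := by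
        rw [hc, ← hql]
        exact (hq (-ρ0)).hasDerivWithinAt
      apply hq'.congr_of_eventuallyEq
      · rw [hc]
        filter_upwards [eventually_nhdsWithin_of_eventually_nhds
          (eventually_lt_nhds (by linarith : -ρ0 < ρ0)), self_mem_nhdsWithin]
          with x hx1 hx2
        simp only [w]
        rw [if_neg (not_lt.2 (show -ρ0 ≤ x from hx2)), if_pos hx1.le]
      · rw [hc]
        simp only [w]
        rw [if_neg (lt_irrefl _), if_pos (by linarith)]
    have hD : HasDerivAt w (-l01) ρ := by
      have := hL.union hR
      rwa [Set.Iic_union_Ici, hasDerivWithinAt_univ] at this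
    rw [hD.deriv]
    constructor <;> linarith
  · rcases lt_trichotomy ρ ρ0 with hc2 | hc2 | hc2
    · -- interior
      have hev : w =ᶠ[nhds ρ] q := by
        filter_upwards [Ioo_mem_nhds hc hc2] with x hx
        simp only [w]
        rw [if_neg (not_lt.2 hx.1.le), if_pos hx.2.le]
      have : deriv w ρ = 4 * k4 * ρ ^ 3 + 2 * k2 * ρ + k1 := by
        rw [hev.deriv_eq, (hq ρ).deriv]
      rw [this]
      exact hbound ρ (by linarith) (by linarith)
    · -- right cut point
      have hL : HasDerivWithinAt w l10 (Set.Iic ρ0) ρ := by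
        have hq' : HasDerivWithinAt q l10 (Set.Iic ρ0) ρ := by
          rw [hc2, ← hqr]
          exact (hq ρ0).hasDerivWithinAt
        apply hq'.congr_of_eventuallyEq
        · rw [hc2]
          filter_upwards [eventually_nhdsWithin_of_eventually_nhds
            (eventually_gt_nhds (by linarith : -ρ0 < ρ0)), self_mem_nhdsWithin]
            with x hx1 hx2
          simp only [w]
          rw [if_neg (not_lt.2 hx1.le), if_pos (show x ≤ ρ0 from hx2)]
        · rw [hc2]
          simp only [w]
          rw [if_neg (not_lt.2 (by linarith)), if_pos le_rfl]
      have hR : HasDerivWithinAt w l10 (Set.Ici ρ0) ρ := by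
        apply ((haffR ρ).hasDerivWithinAt).congr
        · intro x hx
          rcases lt_or_eq_of_le (show ρ0 ≤ x from hx) with h | h
          · simp only [w]
            rw [if_neg (not_lt.2 (by linarith)), if_neg (not_le.2 h)]
          · simp only [w, ← h]
            rw [if_neg (not_lt.2 (by linarith)), if_pos le_rfl]
            ring
        · rw [hc2]
          simp only [w]
          rw [if_neg (not_lt.2 (by linarith)), if_pos le_rfl]
          ring
      have hD : HasDerivAt w l10 ρ := by
        have := hL.union hR
        rwa [Set.Iic_union_Ici, hasDerivWithinAt_univ] at this
      rw [hD.deriv]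
      constructor <;> linarith
    · -- right affine region
      have hev : w =ᶠ[nhds ρ] (fun y => q ρ0 + l10 * (y - ρ0)) := by
        filter_upwards [Ioi_mem_nhds hc2] with x hx
        have hx' : ρ0 < x := hx
        simp only [w]
        rw [if_neg (not_lt.2 (by linarith)), if_neg (not_le.2 hx')]
      have : deriv w ρ = l10 := by rw [hev.deriv_eq, (haffR ρ).deriv]
      rw [this]
      constructor <;> linarith
end

section
/- If q(ρ) = k4ρ⁴ + k2ρ² + k1ρ with k4 = -σ²/(12ᾱ²), k2 = ā/ᾱ², ρ0 = (2ā/σ²)^{1/2} > 0, and q'(ρ0) = λ10, q'(-ρ0) = -λ01, then k1 = (λ10 - λ01)/2 and ā = (σ²/2)·(3ᾱ²(λ10+λ01)/(4σ²))^{2/3}. -/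
lemma dq_aux (k4 k2 k1 x : ℝ) :
    deriv (fun x : ℝ => k4 * x ^ 4 + k2 * x ^ 2 + k1 * x) x
      = 4 * k4 * x ^ 3 + 2 * k2 * x + k1 := by
  have h : HasDerivAt (fun x : ℝ => k4 * x ^ 4 + k2 * x ^ 2 + k1 * x)
      (k4 * (4 * x ^ 3) + k2 * (2 * x ^ 1) + k1 * 1) x := by
    exact (((hasDerivAt_pow 4 x).const_mul k4).add
      ((hasDerivAt_pow 2 x).const_mul k2)).add ((hasDerivAt_id x).const_mul k1)
  rw [h.deriv]; ring

/-- First-order smooth pasting determines k1 and ā. -/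
theorem stmt_5 (σ α abar k4 k2 k1 l01 l10 ρ0 : ℝ) (hσ : 0 < σ) (hα : 0 < α)
    (h01 : 0 ≤ l01) (h10 : 0 ≤ l10) (hsum : 0 < l01 + l10) (habar : 0 < abar)
    (hk4 : k4 = -σ ^ 2 / (12 * α ^ 2)) (hk2 : k2 = abar / α ^ 2)
    (hρ0 : ρ0 = Real.sqrt (2 * abar / σ ^ 2)) (hρ0pos : 0 < ρ0)
    (hright : deriv (fun x : ℝ => k4 * x ^ 4 + k2 * x ^ 2 + k1 * x) ρ0 = l10)
    (hleft : deriv (fun x : ℝ => k4 * x ^ 4 + k2 * x ^ 2 + k1 * x) (-ρ0) = -l01) :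
    k1 = (l10 - l01) / 2 ∧
      abar = σ ^ 2 / 2 * (3 * α ^ 2 * (l10 + l01) / (4 * σ ^ 2)) ^ ((2 : ℝ) / 3) := by
  rw [dq_aux] at hright hleft
  have hσ2 : (0:ℝ) < σ ^ 2 := by positivity
  have hα2 : (0:ℝ) < α ^ 2 := by positivity
  have hsq : ρ0 ^ 2 = 2 * abar / σ ^ 2 := by
    rw [hρ0, Real.sq_sqrt (by positivity)]
  have habar' : abar = σ ^ 2 * ρ0 ^ 2 / 2 := by
    field_simp at hsq; linarith
  have hk1 : k1 = (l10 - l01) / 2 := by linarith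
  refine ⟨hk1, ?_⟩
  -- subtract equations
  have hE : 4 * σ ^ 2 / (3 * α ^ 2) * ρ0 ^ 3 = l10 + l01 := by
    have h1 : 8 * k4 * ρ0 ^ 3 + 4 * k2 * ρ0 = l10 + l01 := by linarith
    rw [hk4, hk2, habar'] at h1
    field_simp at h1 ⊢
    nlinarith [sq_nonneg α, hα2, h1]
  have hc : 3 * α ^ 2 * (l10 + l01) / (4 * σ ^ 2) = ρ0 ^ 3 := by
    rw [← hE]; field_simp
  rw [hc, habar']
  have : (ρ0 ^ 3 : ℝ) ^ ((2:ℝ)/3) = ρ0 ^ 2 := by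
    rw [← Real.rpow_natCast ρ0 3, ← Real.rpow_mul hρ0pos.le]
    norm_num
  rw [this]; ring
end
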